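/- Let D be a dyadic grid, f, g ∈ L²(ℝⁿ), and k ≥ 1. Define Φ := Σ_{I∈D, ε,η≠1} ⟨f, h_{I^{(k)}}^η⟩ h_{I^{(k)}}^η(I) ⟨g, h_I^ε⟩ h_I^ε. Then pointwise S_D Φ ≤ C(n) (Mf) · (S_D g), where M is the (dyadic) Hardy–Littlewood maximal function and S_D the dyadic square function. -/

import Mathlib

open MeasureTheory Set
open scoped ENNReal Classical

noncomputable section

/-- A dyadic cube in `ℝⁿ`, encoded by its generation `k` and corner `m`:
the cube `∏ i, [2^k m i, 2^k (m i + 1))`. -/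
abbrev Cube (n : ℕ) := ℤ × (Fin n → ℤ)

/-- The set in `ℝⁿ` corresponding to a dyadic cube. -/
def cubeSet {n : ℕ} (Q : Cube n) : Set (Fin n → ℝ) :=
  {x | ∀ i, (2:ℝ)^Q.1 * Q.2 i ≤ x i ∧ x i < (2:ℝ)^Q.1 * (Q.2 i + 1)}

/-- The volume `|Q| = 2^{kn}` of a dyadic cube. -/
def vol {n : ℕ} (Q : Cube n) : ℝ := ((2:ℝ)^Q.1)^n

/-- The non-cancellative signature `ε = (1,…,1)`. -/
def allOne (n : ℕ) : Fin n → Bool := fun _ => true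

/-- One-dimensional Haar functions on the dyadic interval `I = [2^k m, 2^k(m+1))`:
`h_I^0 = |I|^{-1/2} (1_{I₋} - 1_{I₊})` (for `e = false`) and `h_I^1 = |I|^{-1/2} 1_I`
(for `e = true`). -/
def haar1 (k m : ℤ) (e : Bool) (x : ℝ) : ℝ :=
  ((2:ℝ)^k) ^ (-(1/2) : ℝ) *
    (if e then Set.indicator (Set.Ico ((2:ℝ)^k * m) ((2:ℝ)^k * (m+1))) (fun _ => (1:ℝ)) x
     else Set.indicator (Set.Ico ((2:ℝ)^k * m) ((2:ℝ)^k * ((m : ℝ) + 1/2))) (fun _ => (1:ℝ)) x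
        - Set.indicator (Set.Ico ((2:ℝ)^k * ((m : ℝ) + 1/2)) ((2:ℝ)^k * (m+1))) (fun _ => (1:ℝ)) x)

/-- The Haar function `h_Q^ε = h_{I₁}^{ε₁} ⊗ ⋯ ⊗ h_{I_n}^{ε_n}` on a dyadic cube. -/
def haar {n : ℕ} (Q : Cube n) (ε : Fin n → Bool) (x : Fin n → ℝ) : ℝ :=
  ∏ i, haar1 Q.1 (Q.2 i) (ε i) (x i)

/-- The average `⟨f⟩_Q = |Q|⁻¹ ∫_Q f`. -/
def avg {n : ℕ} (f : (Fin n → ℝ) → ℝ) (Q : Cube n) : ℝ :=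
  (∫ x in cubeSet Q, f x) / vol Q

/-- The Haar coefficient `⟨f, h_Q^ε⟩`. -/
def haarCoef {n : ℕ} (f : (Fin n → ℝ) → ℝ) (Q : Cube n) (ε : Fin n → Bool) : ℝ :=
  ∫ x, f x * haar Q ε x

/-- The dyadic fractional integral `I_α^D f = Σ_Q |Q|^{α/n} ⟨f⟩_Q 1_Q`. -/
def Ialpha {n : ℕ} (α : ℝ) (f : (Fin n → ℝ) → ℝ) (x : Fin n → ℝ) : ℝ :=
  ∑' Q : Cube n, vol Q ^ (α / n) * avg f Q * (cubeSet Q).indicator (fun _ => (1:ℝ)) x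

/-- The bilinear dyadic fractional integral
`I_α^D(f₁,f₂) = Σ_Q |Q|^{α/n} ⟨f₁⟩_Q ⟨f₂⟩_Q 1_Q`. -/
def IalphaBil {n : ℕ} (α : ℝ) (f₁ f₂ : (Fin n → ℝ) → ℝ) (x : Fin n → ℝ) : ℝ :=
  ∑' Q : Cube n, vol Q ^ (α / n) * avg f₁ Q * avg f₂ Q * (cubeSet Q).indicator (fun _ => (1:ℝ)) x

/-- The constant `c_α = Σ_{j=1}^∞ 2^{-jα}`. -/
def calpha (α : ℝ) : ℝ := ∑' j : ℕ, (2:ℝ) ^ (-((j:ℝ)+1) * α)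

/-- The `k`-th dyadic ancestor `Q^{(k)}` of a dyadic cube. -/
def ancestor {n : ℕ} (k : ℕ) (Q : Cube n) : Cube n :=
  (Q.1 + k, fun i => Int.fdiv (Q.2 i) (2^k))

/-- The center of a dyadic cube (a convenient interior point of `Q`). -/
def center {n : ℕ} (Q : Cube n) : Fin n → ℝ := fun i => (2:ℝ)^Q.1 * ((Q.2 i : ℝ) + 1/2)

/-- An axis-parallel cube (box) of sidelength `l` with corner `a`. -/
def box {n : ℕ} (a : Fin n → ℝ) (l : ℝ) : Set (Fin n → ℝ) :=
  {x | ∀ i, a i ≤ x i ∧ x i < a i + l}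

end

/-- The dyadic square function (in `ℝ≥0∞` form):
`S_D f = (Σ_{I,ε≠1} |⟨f,h_I^ε⟩|² 1_I/|I|)^{1/2}`. -/
noncomputable def SD {n : ℕ} (f : (Fin n → ℝ) → ℝ) (x : Fin n → ℝ) : ℝ≥0∞ :=
  (∑' p : Cube n × (Fin n → Bool),
    if p.2 ≠ allOne n then
      ENNReal.ofReal ((haarCoef f p.1 p.2)^2) *
        (cubeSet p.1).indicator (fun _ => (ENNReal.ofReal (vol p.1))⁻¹) x
    else 0) ^ (1/2 : ℝ)

/-- The dyadic Hardy–Littlewood maximal function `Mf(x) = sup_{Q ∋ x} ⟨|f|⟩_Q`. -/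
noncomputable def Mdyadic {n : ℕ} (f : (Fin n → ℝ) → ℝ) (x : Fin n → ℝ) : ℝ≥0∞ :=
  ⨆ Q : Cube n, (cubeSet Q).indicator
    (fun _ => (∫⁻ y in cubeSet Q, ENNReal.ofReal |f y|) / ENNReal.ofReal (vol Q)) x

/-- The Haar coefficient of `Φ = Σ_{I,ε,η≠1} ⟨f,h_{I^{(k)}}^η⟩ h_{I^{(k)}}^η(I) ⟨g,h_I^ε⟩ h_I^ε`
at `(I,ε)`. -/
noncomputable def PhiCoef {n : ℕ} (k : ℕ) (f g : (Fin n → ℝ) → ℝ)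
    (p : Cube n × (Fin n → Bool)) : ℝ :=
  (∑ η ∈ Finset.univ.filter (fun η : Fin n → Bool => η ≠ allOne n),
      haarCoef f (ancestor k p.1) η * haar (ancestor k p.1) η (center p.1)) *
    haarCoef g p.1 p.2

/-! Fix a dyadic cube `I ∋ x` and let `Q = I^{(k)} ⊇ I`. Since `|h_Q^η| ≤ |Q|^{-1/2} 1_Q`, every
product `⟨f, h_Q^η⟩ h_Q^η(I)` is at most `⟨|f|⟩_Q ≤ Mf(x)`, so the `η`-sum multiplying
`⟨g, h_I^ε⟩` in the Haar coefficient of `Φ` is at most `2ⁿ Mf(x)`. Thus each term of the square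
sum of `Φ` at `x` is at most `(2ⁿ Mf(x))²` times the corresponding term for `g`, and
`S_D Φ(x) ≤ 2ⁿ Mf(x) S_D g(x)`. -/

lemma ENNReal.rpow_half_tsum_le_mul {ι : Type*} {a b : ι → ℝ≥0∞} {B : ℝ≥0∞}
    (h : ∀ i, a i ≤ B ^ 2 * b i) :
    (∑' i, a i) ^ (1/2 : ℝ) ≤ B * (∑' i, b i) ^ (1/2 : ℝ) := by
  calc (∑' i, a i) ^ (1/2 : ℝ) ≤ (B ^ 2 * ∑' i, b i) ^ (1/2 : ℝ) := by
        rw [← ENNReal.tsum_mul_left]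
        exact ENNReal.rpow_le_rpow (ENNReal.tsum_le_tsum h) (by norm_num)
    _ = B * (∑' i, b i) ^ (1/2 : ℝ) := by
        rw [ENNReal.mul_rpow_of_nonneg _ _ (by norm_num), ← ENNReal.rpow_natCast,
          ← ENNReal.rpow_mul]
        norm_num

section

variable {n : ℕ}

lemma measurableSet_cubeSet (Q : Cube n) : MeasurableSet (cubeSet Q) := by
  have : cubeSet Q = univ.pi fun i => Ico ((2:ℝ)^Q.1 * Q.2 i) ((2:ℝ)^Q.1 * (Q.2 i + 1)) := by
    ext x; simp [cubeSet]
  rw [this]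
  exact .univ_pi fun _ => measurableSet_Ico

lemma vol_pos (Q : Cube n) : 0 < vol Q := by
  unfold vol; positivity

lemma abs_haar1_le (k m : ℤ) (e : Bool) (x : ℝ) :
    |haar1 k m e x| ≤
      (Ico ((2:ℝ)^k * m) ((2:ℝ)^k * (m+1))).indicator (fun _ => ((2:ℝ)^k) ^ (-(1/2) : ℝ)) x := by
  have h2 : (0:ℝ) < 2^k := by positivity
  have hc : 0 ≤ ((2:ℝ)^k) ^ (-(1/2) : ℝ) := by positivity
  by_cases hx : x ∈ Ico ((2:ℝ)^k * m) ((2:ℝ)^k * (m+1))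
  · rw [indicator_of_mem hx, haar1, abs_mul, abs_of_nonneg hc]
    refine mul_le_of_le_one_right hc ?_
    cases e <;> simp only [indicator_apply] <;> split_ifs <;> norm_num
  · have hout : ∀ a b, (2:ℝ)^k * m ≤ a → b ≤ (2:ℝ)^k * (m+1) → x ∉ Ico a b :=
      fun a b ha hb h => hx (Ico_subset_Ico ha hb h)
    have hmid : (2:ℝ)^k * m ≤ (2:ℝ)^k * (m + 1/2) ∧ (2:ℝ)^k * (m + 1/2) ≤ (2:ℝ)^k * (m+1) := by
      constructor <;> nlinarith
    rw [indicator_of_notMem hx, haar1, indicator_of_notMem (hout _ _ le_rfl le_rfl),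
      indicator_of_notMem (hout _ _ le_rfl hmid.2), indicator_of_notMem (hout _ _ hmid.1 le_rfl)]
    simp

lemma abs_haar_le (Q : Cube n) (η : Fin n → Bool) (x : Fin n → ℝ) :
    |haar Q η x| ≤ (cubeSet Q).indicator (fun _ => vol Q ^ (-(1/2) : ℝ)) x := by
  have h2 : (0:ℝ) < 2^Q.1 := by positivity
  have hvol : vol Q ^ (-(1/2) : ℝ) = (((2:ℝ)^Q.1) ^ (-(1/2) : ℝ)) ^ n := by
    rw [vol, ← Real.rpow_natCast, ← Real.rpow_natCast, ← Real.rpow_mul h2.le,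
      ← Real.rpow_mul h2.le, mul_comm]
  have hfactor := fun i => abs_haar1_le Q.1 (Q.2 i) (η i) (x i)
  rw [haar, Finset.abs_prod]
  by_cases hx : x ∈ cubeSet Q
  · rw [indicator_of_mem hx, hvol]
    refine (Finset.prod_le_prod (fun i _ => abs_nonneg _) fun i _ => ?_).trans_eq
      (by simp : ∏ _i : Fin n, ((2:ℝ)^Q.1) ^ (-(1/2) : ℝ) = _)
    simpa only [indicator_of_mem (mem_Ico.mpr (hx i))] using hfactor i
  · obtain ⟨i, hi⟩ : ∃ i, x i ∉ Ico ((2:ℝ)^Q.1 * Q.2 i) ((2:ℝ)^Q.1 * (Q.2 i + 1)) := by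
      simpa [cubeSet] using hx
    rw [indicator_of_notMem hx]
    refine (Finset.prod_eq_zero (Finset.mem_univ i) (abs_eq_zero.mpr ?_)).le
    simpa only [indicator_of_notMem hi, abs_nonpos_iff] using hfactor i

lemma haar_eq_zero_of_notMem {Q : Cube n} {x : Fin n → ℝ} (hx : x ∉ cubeSet Q)
    (η : Fin n → Bool) : haar Q η x = 0 := by
  simpa only [indicator_of_notMem hx, abs_nonpos_iff] using abs_haar_le Q η x

lemma abs_haar_le_rpow (Q : Cube n) (η : Fin n → Bool) (x : Fin n → ℝ) :
    |haar Q η x| ≤ vol Q ^ (-(1/2) : ℝ) :=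
  (abs_haar_le Q η x).trans
    (indicator_le_self' (fun _ _ => Real.rpow_nonneg (vol_pos Q).le _) x)

lemma ofReal_abs_haarCoef_le (f : (Fin n → ℝ) → ℝ) (Q : Cube n) (η : Fin n → Bool) :
    ENNReal.ofReal |haarCoef f Q η| ≤
      ENNReal.ofReal (vol Q ^ (-(1/2) : ℝ)) * ∫⁻ y in cubeSet Q, ENNReal.ofReal |f y| := by
  have hpoint : ∀ y, ‖f y * haar Q η y‖ₑ ≤ (cubeSet Q).indicator
      (fun y => ENNReal.ofReal (vol Q ^ (-(1/2) : ℝ)) * ENNReal.ofReal |f y|) y := by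
    intro y
    by_cases hy : y ∈ cubeSet Q
    · rw [indicator_of_mem hy, Real.enorm_eq_ofReal_abs, abs_mul, mul_comm,
        ← ENNReal.ofReal_mul (Real.rpow_nonneg (vol_pos Q).le _)]
      exact ENNReal.ofReal_le_ofReal
        (mul_le_mul_of_nonneg_right (abs_haar_le_rpow Q η y) (abs_nonneg _))
    · simp [haar_eq_zero_of_notMem hy]
  calc ENNReal.ofReal |haarCoef f Q η| = ‖∫ y, f y * haar Q η y‖ₑ := by
        rw [haarCoef, Real.enorm_eq_ofReal_abs]
    _ ≤ ∫⁻ y, ‖f y * haar Q η y‖ₑ := enorm_integral_le_lintegral_enorm _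
    _ ≤ ∫⁻ y, (cubeSet Q).indicator
          (fun y => ENNReal.ofReal (vol Q ^ (-(1/2) : ℝ)) * ENNReal.ofReal |f y|) y :=
        lintegral_mono hpoint
    _ = _ := by
        rw [lintegral_indicator (measurableSet_cubeSet Q),
          lintegral_const_mul' _ _ ENNReal.ofReal_ne_top]

lemma ofReal_abs_haarCoef_mul_haar_le (f : (Fin n → ℝ) → ℝ) (Q : Cube n) (η : Fin n → Bool)
    (z : Fin n → ℝ) :
    ENNReal.ofReal |haarCoef f Q η * haar Q η z| ≤
      (∫⁻ y in cubeSet Q, ENNReal.ofReal |f y|) / ENNReal.ofReal (vol Q) := by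
  have hv := vol_pos Q
  have hsq : ENNReal.ofReal (vol Q ^ (-(1/2) : ℝ)) * ENNReal.ofReal (vol Q ^ (-(1/2) : ℝ)) =
      (ENNReal.ofReal (vol Q))⁻¹ := by
    rw [← ENNReal.ofReal_mul (Real.rpow_nonneg hv.le _), ← Real.rpow_add hv,
      ← ENNReal.ofReal_inv_of_pos hv, ← Real.rpow_neg_one]
    norm_num
  calc ENNReal.ofReal |haarCoef f Q η * haar Q η z|
      ≤ ENNReal.ofReal (vol Q ^ (-(1/2) : ℝ)) * (∫⁻ y in cubeSet Q, ENNReal.ofReal |f y|) *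
          ENNReal.ofReal (vol Q ^ (-(1/2) : ℝ)) := by
        rw [abs_mul, ENNReal.ofReal_mul (abs_nonneg _)]
        gcongr
        · exact ofReal_abs_haarCoef_le f Q η
        · exact abs_haar_le_rpow Q η z
    _ = _ := by rw [mul_right_comm, hsq, ENNReal.div_eq_inv_mul]

lemma lintegral_div_vol_le_Mdyadic (f : (Fin n → ℝ) → ℝ) {Q : Cube n} {x : Fin n → ℝ}
    (hx : x ∈ cubeSet Q) :
    (∫⁻ y in cubeSet Q, ENNReal.ofReal |f y|) / ENNReal.ofReal (vol Q) ≤ Mdyadic f x := by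
  have hQ := le_iSup (fun Q' : Cube n => (cubeSet Q').indicator
    (fun _ => (∫⁻ y in cubeSet Q', ENNReal.ofReal |f y|) / ENNReal.ofReal (vol Q')) x) Q
  rwa [indicator_of_mem hx] at hQ

lemma cubeSet_subset_ancestor (k : ℕ) (I : Cube n) : cubeSet I ⊆ cubeSet (ancestor k I) := by
  intro x hx i
  have hk : (0:ℤ) < 2^k := by positivity
  have hlo : (2:ℤ)^k * (I.2 i / 2^k) ≤ I.2 i := Int.mul_ediv_self_le hk.ne'
  have hhi : I.2 i + 1 ≤ (2:ℤ)^k * (I.2 i / 2^k + 1) := by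
    linarith [Int.lt_mul_ediv_self_add (x := I.2 i) hk]
  have hlo' : (2:ℝ)^k * ((I.2 i / 2^k : ℤ) : ℝ) ≤ I.2 i := by exact_mod_cast hlo
  have hhi' : (I.2 i : ℝ) + 1 ≤ (2:ℝ)^k * ((I.2 i / 2^k : ℤ) + 1) := by exact_mod_cast hhi
  have h2 : (0:ℝ) < 2^I.1 := by positivity
  obtain ⟨hxlo, hxhi⟩ := hx i
  simp only [ancestor, Int.fdiv_eq_ediv_of_nonneg _ hk.le, zpow_add₀ (two_ne_zero' ℝ),
    zpow_natCast]
  constructor <;> nlinarith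

lemma ofReal_abs_sum_haarCoef_mul_haar_le (f : (Fin n → ℝ) → ℝ) (s : Finset (Fin n → Bool))
    {Q : Cube n} {x : Fin n → ℝ} (hx : x ∈ cubeSet Q) (z : Fin n → ℝ) :
    ENNReal.ofReal |∑ η ∈ s, haarCoef f Q η * haar Q η z| ≤ s.card * Mdyadic f x := by
  rw [← Real.enorm_eq_ofReal_abs, ← nsmul_eq_mul]
  refine (enorm_sum_le _ _).trans (Finset.sum_le_card_nsmul _ _ _ fun η _ => ?_)
  rw [Real.enorm_eq_ofReal_abs]
  exact (ofReal_abs_haarCoef_mul_haar_le f Q η z).trans (lintegral_div_vol_le_Mdyadic f hx)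

lemma ofReal_sq_PhiCoef_le (k : ℕ) (f g : (Fin n → ℝ) → ℝ) (p : Cube n × (Fin n → Bool))
    {x : Fin n → ℝ} (hx : x ∈ cubeSet p.1) :
    ENNReal.ofReal (PhiCoef k f g p ^ 2) ≤
      (2 ^ n * Mdyadic f x) ^ 2 * ENNReal.ofReal (haarCoef g p.1 p.2 ^ 2) := by
  set s := Finset.univ.filter fun η : Fin n → Bool => η ≠ allOne n
  have hcard : (s.card : ℝ≥0∞) ≤ 2 ^ n := by
    exact_mod_cast (Finset.card_le_univ s).trans_eq (by simp)
  have hsum := ofReal_abs_sum_haarCoef_mul_haar_le f s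
    (cubeSet_subset_ancestor k p.1 hx) (center p.1)
  rw [PhiCoef, mul_pow, ENNReal.ofReal_mul (sq_nonneg _), ← sq_abs,
    ENNReal.ofReal_pow (abs_nonneg _)]
  gcongr
  exact hsum.trans (by gcongr)

end

/-- pointwise, `S_D Φ ≤ C(n) (Mf) (S_D g)` for
`Φ = Σ_{I,ε,η≠1} ⟨f,h_{I^{(k)}}^η⟩ h_{I^{(k)}}^η(I) ⟨g,h_I^ε⟩ h_I^ε`. -/
theorem statement17 (n : ℕ) :
    ∃ C : ℝ, 0 < C ∧ ∀ f g : (Fin n → ℝ) → ℝ, MemLp f 2 volume → MemLp g 2 volume →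
      ∀ k : ℕ, 1 ≤ k → ∀ x : Fin n → ℝ,
        (∑' p : Cube n × (Fin n → Bool),
          if p.2 ≠ allOne n then
            ENNReal.ofReal ((PhiCoef k f g p)^2) *
              (cubeSet p.1).indicator (fun _ => (ENNReal.ofReal (vol p.1))⁻¹) x
          else 0) ^ (1/2 : ℝ)
        ≤ ENNReal.ofReal C * Mdyadic f x * SD g x := by
  refine ⟨2 ^ n, by positivity, fun f g _ _ k _ x => ?_⟩
  rw [ENNReal.ofReal_pow zero_le_two, ENNReal.ofReal_ofNat, SD]
  refine ENNReal.rpow_half_tsum_le_mul fun p => ?_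
  split_ifs
  · by_cases hx : x ∈ cubeSet p.1
    · simp only [indicator_of_mem hx, ← mul_assoc]
      gcongr
      exact ofReal_sq_PhiCoef_le k f g p hx
    · simp [indicator_of_notMem hx]
  · simp
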